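/- For every x ∈ ℝ^n, Σ_{i=1}^n [f_0(x_i) − f_0*] ≤ ḡ(x)·𝟏ᵀ(x − x_0*·𝟏) + β·(x − x_0*·𝟏)ᵀ J_⊥ x. -/

import Mathlib

open Matrix

/-- Tangent line lies below a convex differentiable function. -/
lemma tangent_le' {f : ℝ → ℝ} (hc : ConvexOn ℝ Set.univ f) (hd : Differentiable ℝ f)
    (a b : ℝ) : f a + deriv f a * (b - a) ≤ f b := by
  rcases lt_trichotomy a b with h | h | h
  · have h1 := hc.deriv_le_slope (Set.mem_univ a) (Set.mem_univ b) h (hd a)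
    rw [slope_def_field] at h1
    have h2 : deriv f a * (b - a) ≤ f b - f a := by
      have hba : (0:ℝ) < b - a := by linarith
      calc deriv f a * (b - a) ≤ ((f b - f a) / (b - a)) * (b - a) := by
            exact mul_le_mul_of_nonneg_right h1 hba.le
        _ = f b - f a := by field_simp
    linarith
  · subst h; simp
  · have h1 := hc.slope_le_deriv (Set.mem_univ b) (Set.mem_univ a) h (hd a)
    rw [slope_def_field] at h1
    have hab : (0:ℝ) < a - b := by linarith
    have h2 : f a - f b ≤ deriv f a * (a - b) := by
      calc f a - f b = ((f a - f b) / (a - b)) * (a - b) := by field_simp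
        _ ≤ deriv f a * (a - b) := mul_le_mul_of_nonneg_right h1 hab.le
    have h3 : deriv f a * (b - a) = -(deriv f a * (a - b)) := by ring
    linarith

/-- Quadratic upper bound for a β-smooth differentiable function. -/
lemma smooth_upper' {f : ℝ → ℝ} (hd : Differentiable ℝ f) {β : ℝ}
    (hs : ∀ a b : ℝ, |deriv f a - deriv f b| ≤ β * |a - b|) (a b : ℝ) :
    f b ≤ f a + deriv f a * (b - a) + β / 2 * (b - a) ^ 2 := by
  set φ : ℝ → ℝ := fun y => f a + deriv f a * (y - a) + β / 2 * (y - a) ^ 2 - f y with hφ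
  have hder : ∀ y : ℝ, HasDerivAt φ (deriv f a + β * (y - a) - deriv f y) y := by
    intro y
    have h1 : HasDerivAt (fun y : ℝ => f a + deriv f a * (y - a) + β / 2 * (y - a) ^ 2)
        (deriv f a * 1 + β / 2 * (2 * (y - a) ^ 1 * 1)) y := by
      exact (HasDerivAt.const_add (f a) (((hasDerivAt_id y).sub_const a).const_mul _)).add
        ((((hasDerivAt_id y).sub_const a).pow 2).const_mul _)
    have h2 := h1.sub (hd y).hasDerivAt
    exact h2.congr_deriv (by ring)
  have hdiffφ : Differentiable ℝ φ := fun y => (hder y).differentiableAt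
  have hderiv : ∀ y, deriv φ y = deriv f a + β * (y - a) - deriv f y :=
    fun y => (hder y).deriv
  have hφa : φ a = 0 := by simp [hφ]
  have hnonneg : 0 ≤ φ b := by
    rcases le_total a b with h | h
    · have mono : MonotoneOn φ (Set.Ici a) := by
        apply monotoneOn_of_deriv_nonneg (convex_Ici a) hdiffφ.continuous.continuousOn
          hdiffφ.differentiableOn
        intro y hy
        rw [interior_Ici] at hy
        rw [hderiv]
        have h3 := (abs_le.1 (hs y a)).2
        have h4 : |y - a| = y - a := abs_of_nonneg (by simp at hy; linarith)
        rw [h4] at h3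
        linarith
      have := mono (Set.self_mem_Ici) (Set.mem_Ici.2 h) h
      linarith [hφa ▸ this]
    · have anti : AntitoneOn φ (Set.Iic a) := by
        apply antitoneOn_of_deriv_nonpos (convex_Iic a) hdiffφ.continuous.continuousOn
          hdiffφ.differentiableOn
        intro y hy
        rw [interior_Iic] at hy
        rw [hderiv]
        have h3 := (abs_le.1 (hs a y)).2
        have h4 : |a - y| = a - y := abs_of_nonneg (by simp at hy; linarith)
        rw [h4] at h3
        linarith
      have := anti (Set.mem_Iic.2 h) (Set.self_mem_Iic) h
      linarith [hφa ▸ this]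
  simp only [hφ] at hnonneg
  linarith

/-- **Inequality (18)** in the proof of Proposition 3:
`Σᵢ [f₀(xᵢ) − f₀*] ≤ ḡ(x)·𝟏ᵀ(x − x₀*𝟏) + β (x − x₀*𝟏)ᵀ J_⊥ x`. -/
theorem summed_supply_rate_inequality
    (n : ℕ) (hn : 0 < n) (β : ℝ) (hβ : 0 < β) (f : Fin n → ℝ → ℝ)
    (hconv : ∀ i, ConvexOn ℝ Set.univ (f i))
    (hdiff : ∀ i, Differentiable ℝ (f i))
    (hsmooth : ∀ i, ∀ a b : ℝ, |deriv (f i) a - deriv (f i) b| ≤ β * |a - b|)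
    (x₀ : ℝ) (hmin : ∀ z : ℝ, ((1 : ℝ) / n) * ∑ i : Fin n, f i x₀
                              ≤ ((1 : ℝ) / n) * ∑ i : Fin n, f i z)
    (x : Fin n → ℝ) :
    letI J : Matrix (Fin n) (Fin n) ℝ := (n : ℝ)⁻¹ • (fun _ _ => (1 : ℝ))
    letI Jp : Matrix (Fin n) (Fin n) ℝ := 1 - J
    ∑ i : Fin n,
        (((1 : ℝ) / n) * ∑ j : Fin n, f j (x i)
          - ((1 : ℝ) / n) * ∑ j : Fin n, f j x₀)
      ≤ (((1 : ℝ) / n) * ∑ i : Fin n, deriv (f i) (x i)) *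
            (∑ i : Fin n, (x i - x₀))
        + β * ((fun i => x i - x₀) ⬝ᵥ (Jp *ᵥ x)) := by
  have hN : (0:ℝ) < (n:ℝ) := by exact_mod_cast hn
  set g : Fin n → ℝ := fun j => deriv (f j) (x j) with hg
  -- pointwise key inequality
  have key : ∀ i j : Fin n, f j (x i) - f j x₀ ≤
      g j * (x i - x₀) + β / 2 * (x i - x j) ^ 2 := by
    intro i j
    have h1 : f j (x i) ≤ f j (x j) + g j * (x i - x j) + β / 2 * (x i - x j) ^ 2 :=
      smooth_upper' (hdiff j) (hsmooth j) (x j) (x i)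
    have h2 : f j (x j) + g j * (x₀ - x j) ≤ f j x₀ :=
      tangent_le' (hconv j) (hdiff j) (x j) x₀
    have h3 : g j * (x i - x j) = g j * (x i - x₀) + g j * (x₀ - x j) := by ring
    linarith
  -- rewrite LHS
  have hL : ∑ i : Fin n,
        (((1 : ℝ) / n) * ∑ j : Fin n, f j (x i)
          - ((1 : ℝ) / n) * ∑ j : Fin n, f j x₀)
      = ((1:ℝ)/n) * ∑ i : Fin n, ∑ j : Fin n, (f j (x i) - f j x₀) := by
    simp only [← mul_sub, ← Finset.sum_sub_distrib]
    rw [Finset.mul_sum]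
  -- the bound
  have hbound : ((1:ℝ)/n) * ∑ i : Fin n, ∑ j : Fin n, (f j (x i) - f j x₀)
      ≤ ((1:ℝ)/n) * ∑ i : Fin n, ∑ j : Fin n,
          (g j * (x i - x₀) + β / 2 * (x i - x j) ^ 2) := by
    apply mul_le_mul_of_nonneg_left _ (by positivity)
    exact Finset.sum_le_sum fun i _ => Finset.sum_le_sum fun j _ => key i j
  -- compute the dot product term
  have hdot : ((fun i => x i - x₀) ⬝ᵥ (((1 - (n:ℝ)⁻¹ • fun _ _ => (1:ℝ)) : Matrix (Fin n) (Fin n) ℝ) *ᵥ x))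
      = ∑ i : Fin n, (x i - x₀) * (x i - (n:ℝ)⁻¹ * ∑ j : Fin n, x j) := by
    have hsm : ∀ i j : Fin n,
        (((n:ℝ)⁻¹ • fun _ _ => (1:ℝ)) : Matrix (Fin n) (Fin n) ℝ) i j = (n:ℝ)⁻¹ := by
      intro i j; show (n:ℝ)⁻¹ • (1:ℝ) = (n:ℝ)⁻¹; simp
    simp only [dotProduct, mulVec, Matrix.sub_apply, Matrix.one_apply,
      hsm, mul_one, sub_mul, ite_mul, one_mul, zero_mul,
      Finset.sum_sub_distrib, Finset.sum_ite_eq, Finset.mem_univ, if_true,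
      ← Finset.mul_sum]
  -- the RHS identity
  have hR : ((1:ℝ)/n) * ∑ i : Fin n, ∑ j : Fin n,
          (g j * (x i - x₀) + β / 2 * (x i - x j) ^ 2)
      = (((1 : ℝ) / n) * ∑ i : Fin n, g i) * (∑ i : Fin n, (x i - x₀))
        + β * ((fun i => x i - x₀) ⬝ᵥ (((1 - (n:ℝ)⁻¹ • fun _ _ => (1:ℝ)) : Matrix (Fin n) (Fin n) ℝ) *ᵥ x)) := by
    rw [hdot]
    set S1 : ℝ := ∑ i : Fin n, x i with hS1
    set S2 : ℝ := ∑ i : Fin n, (x i)^2 with hS2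
    set G : ℝ := ∑ i : Fin n, g i with hG
    have e1 : ∑ i : Fin n, ∑ j : Fin n,
          (g j * (x i - x₀) + β / 2 * (x i - x j) ^ 2)
        = G * ∑ i : Fin n, (x i - x₀)
          + β / 2 * (2 * (n:ℝ) * S2 - 2 * S1^2) := by
      have inner : ∀ i : Fin n, ∑ j : Fin n,
            (g j * (x i - x₀) + β / 2 * (x i - x j) ^ 2)
          = G * (x i - x₀) + β / 2 * ((n:ℝ) * (x i)^2 - 2 * x i * S1 + S2) := by
        intro i
        rw [Finset.sum_add_distrib, ← Finset.sum_mul]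
        congr 1
        have : ∀ j : Fin n, β / 2 * (x i - x j)^2
            = β / 2 * ((x i)^2 - 2 * x i * x j + (x j)^2) := by intro j; ring
        rw [Finset.sum_congr rfl fun j _ => this j, ← Finset.mul_sum]
        congr 1
        rw [Finset.sum_add_distrib, Finset.sum_sub_distrib, Finset.sum_const,
          ← Finset.mul_sum, Finset.card_univ, Fintype.card_fin]
        push_cast
        ring
      rw [Finset.sum_congr rfl fun i _ => inner i, Finset.sum_add_distrib,
        ← Finset.mul_sum, ← Finset.mul_sum]
      congr 1
      have : ∑ i : Fin n, ((n:ℝ) * (x i)^2 - 2 * x i * S1 + S2)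
          = (n:ℝ) * S2 - 2 * S1 * S1 + (n:ℝ) * S2 := by
        rw [Finset.sum_add_distrib, Finset.sum_sub_distrib, ← Finset.mul_sum,
          Finset.sum_const, Finset.card_univ, Fintype.card_fin]
        have h2 : ∑ i : Fin n, 2 * x i * S1 = 2 * S1 * S1 := by
          rw [← Finset.sum_mul, ← Finset.mul_sum]
        rw [h2]
        push_cast
        ring
      rw [this]
      ring
    rw [e1]
    have e2 : ∑ i : Fin n, (x i - x₀) * (x i - (n:ℝ)⁻¹ * S1)
        = S2 - S1^2 / (n:ℝ) := by
      have : ∀ i : Fin n, (x i - x₀) * (x i - (n:ℝ)⁻¹ * S1)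
          = (x i)^2 - x i * ((n:ℝ)⁻¹ * S1) - x₀ * x i + x₀ * ((n:ℝ)⁻¹ * S1) := by
        intro i; ring
      rw [Finset.sum_congr rfl fun i _ => this i]
      rw [Finset.sum_add_distrib, Finset.sum_sub_distrib, Finset.sum_sub_distrib,
        ← Finset.sum_mul, ← Finset.mul_sum, Finset.sum_const, Finset.card_univ,
        Fintype.card_fin]
      have hn0 : (n:ℝ) ≠ 0 := hN.ne'
      rw [← hS1, ← hS2]
      field_simp
      linear_combination ((n:ℝ) * S1 * x₀) * (mul_inv_cancel₀ hn0)
    rw [e2]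
    have hTsum : ∑ i : Fin n, (x i - x₀) = S1 - (n:ℝ) * x₀ := by
      rw [Finset.sum_sub_distrib, Finset.sum_const, Finset.card_univ, Fintype.card_fin]
      push_cast; ring
    rw [hTsum]
    field_simp
  rw [hL]
  calc ((1:ℝ)/n) * ∑ i : Fin n, ∑ j : Fin n, (f j (x i) - f j x₀)
      ≤ ((1:ℝ)/n) * ∑ i : Fin n, ∑ j : Fin n,
          (g j * (x i - x₀) + β / 2 * (x i - x j) ^ 2) := hbound
    _ = _ := hR
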